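/- Let N ≥ 2 be an integer, t₀ ≥ 1 and β ≥ 0. Then the function Φ_β(x,t) = (t₀+t)^{−β} exp(−|x|²/(4(t₀+t))) M(N/2−β, N/2; |x|²/(4(t₀+t))) satisfies the heat equation ∂_tΦ_β(x,t) = ΔΦ_β(x,t) for all (x,t) ∈ ℝ^N × [0,∞). -/

import Mathlib

open MeasureTheory Real

/-- Kummer's confluent hypergeometric function `M(a,c;z) = ∑ (a)_n/(c)_n zⁿ/n!`. -/
noncomputable def kummerM (a c z : ℝ) : ℝ :=
  ∑' n : ℕ, ((ascPochhammer ℝ n).eval a / (ascPochhammer ℝ n).eval c) * z ^ n / (n.factorial : ℝ)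

/-- The weight function
`Φ_β(x,t) = (t₀+t)^{-β} exp(-|x|²/(4(t₀+t))) M(N/2-β, N/2; |x|²/(4(t₀+t)))`. -/
noncomputable def Phi (N : ℕ) (t₀ β : ℝ) (x : EuclideanSpace ℝ (Fin N)) (t : ℝ) : ℝ :=
  (t₀ + t) ^ (-β) * Real.exp (-‖x‖ ^ 2 / (4 * (t₀ + t))) *
    kummerM ((N : ℝ) / 2 - β) ((N : ℝ) / 2) (‖x‖ ^ 2 / (4 * (t₀ + t)))

/-- The Laplacian (in the space variable) of a function on `ℝ^N`. -/
noncomputable def laplacian {N : ℕ} (f : EuclideanSpace ℝ (Fin N) → ℝ)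
    (x : EuclideanSpace ℝ (Fin N)) : ℝ :=
  ∑ i : Fin N, fderiv ℝ (fun y => fderiv ℝ f y (EuclideanSpace.single i 1)) x
    (EuclideanSpace.single i 1)

/-! With `τ = t₀ + t` and `z = |x|²/(4τ)` we have `Φ_β = τ^{-β} W(z)` for the profile
`W(z) = e^{-z} M(a, c; z)`, `a = N/2 - β`, `c = N/2`. For any profile, the chain rule gives
`(∂_τ - Δ)(τ^{-β} W(z)) = -τ^{-β-1} (z W'' + (N/2 + z) W' + β W)(z)`. Comparing coefficients of
the entire power series `M` gives Kummer's equation `z M'' + (c - z) M' - a M = 0`, and for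
`W = e^{-z} M` it becomes `z W'' + (c + z) W' + (c - a) W = 0`, which is the vanishing of the
bracket since `c - a = β`. -/

open Filter Metric

noncomputable def powerSum (u : ℕ → ℝ) (z : ℝ) : ℝ := ∑' n, u n * z ^ n

def derivCoeff (u : ℕ → ℝ) (n : ℕ) : ℝ := (n + 1) * u (n + 1)

section PowerSum

variable {u : ℕ → ℝ}

lemma summable_norm_derivCoeff_mul_pow (hu : ∀ z, Summable fun n => ‖u n * z ^ n‖) (z : ℝ) :
    Summable fun n => ‖derivCoeff u n * z ^ n‖ := by
  have hshift := (summable_nat_add_iff 1).2 (hu (2 * (|z| + 1)))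
  refine hshift.of_nonneg_of_le (fun n => norm_nonneg _) fun n => ?_
  have hn : ((n : ℝ) + 1) ≤ 2 ^ (n + 1) := by exact_mod_cast (Nat.lt_two_pow_self).le
  have hz : |z| ^ n ≤ (|z| + 1) ^ (n + 1) := by
    calc |z| ^ n ≤ (|z| + 1) ^ n := by gcongr; linarith
      _ ≤ (|z| + 1) ^ (n + 1) := pow_le_pow_right₀ (by linarith [abs_nonneg z]) n.le_succ
  simp only [derivCoeff, norm_mul, norm_pow, Real.norm_eq_abs, mul_pow]
  rw [abs_of_nonneg (by positivity : (0 : ℝ) ≤ n + 1), abs_of_nonneg (by positivity : (0 : ℝ) ≤ 2),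
    abs_of_nonneg (by positivity : (0 : ℝ) ≤ |z| + 1)]
  calc (n + 1) * |u (n + 1)| * |z| ^ n = |u (n + 1)| * ((n + 1) * |z| ^ n) := by ring
    _ ≤ |u (n + 1)| * (2 ^ (n + 1) * (|z| + 1) ^ (n + 1)) := by gcongr

lemma hasDerivAt_powerSum (hu : ∀ z, Summable fun n => ‖u n * z ^ n‖) (z : ℝ) :
    HasDerivAt (powerSum u) (powerSum (derivCoeff u) z) z := by
  set R := |z| + 1
  have hR : 1 ≤ R := by simp [R]
  have hbound : Summable fun n : ℕ => ‖u n‖ * (n * R ^ (n - 1)) := by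
    rw [← summable_nat_add_iff 1]
    refine (summable_norm_derivCoeff_mul_pow hu R).congr fun n => ?_
    simp only [derivCoeff, norm_mul, norm_pow, Real.norm_eq_abs,
      abs_of_nonneg (by linarith : 0 ≤ R)]
    push_cast
    rw [abs_of_nonneg (by positivity : (0 : ℝ) ≤ n + 1)]
    ring
  have key := hasDerivAt_tsum_of_isPreconnected hbound isOpen_ball
    (convex_ball (0 : ℝ) R).isPreconnected
    (fun n w _ => (hasDerivAt_pow n w).const_mul (u n))
    (fun n w hw => ?_) (mem_ball_self (by linarith)) (by simpa using (hu 0).of_norm)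
    (by simp [R] : z ∈ ball (0 : ℝ) R)
  · refine key.congr_deriv ?_
    have hshift : (fun n : ℕ => u (n + 1) * ((n + 1 : ℕ) * z ^ (n + 1 - 1)))
        = fun n => derivCoeff u n * z ^ n := by
      funext n; simp only [Nat.cast_add, Nat.cast_one, add_tsub_cancel_right, derivCoeff]; ring
    rw [tsum_eq_zero_add' (hshift ▸ (summable_norm_derivCoeff_mul_pow hu z).of_norm), hshift]
    simp [powerSum]
  · rw [mem_ball_zero_iff] at hw
    rw [norm_mul, norm_mul, norm_pow, Real.norm_natCast]
    gcongr

lemma HasSum.natCast_mul_mul_pow {z S : ℝ} (h : HasSum (fun n => derivCoeff u n * z ^ n) S) :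
    HasSum (fun n : ℕ => n * u n * z ^ n) (z * S) := by
  rw [← hasSum_nat_add_iff' 1]
  simpa [derivCoeff, pow_succ, mul_assoc, mul_comm, mul_left_comm] using h.mul_left z

end PowerSum

noncomputable def kummerCoeff (a c : ℝ) (n : ℕ) : ℝ :=
  (ascPochhammer ℝ n).eval a / (ascPochhammer ℝ n).eval c / n.factorial

section Kummer

variable {a c : ℝ}

lemma kummerM_eq_powerSum (a c : ℝ) : kummerM a c = powerSum (kummerCoeff a c) := by
  funext z
  exact tsum_congr fun n => by simp only [kummerCoeff]; ring

lemma kummerCoeff_succ (hc : 0 < c) (n : ℕ) :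
    (n + 1) * (c + n) * kummerCoeff a c (n + 1) = (a + n) * kummerCoeff a c n := by
  have hpoch := ascPochhammer_pos n c hc
  have hcn : 0 < c + n := by positivity
  simp only [kummerCoeff, ascPochhammer_succ_eval, Nat.factorial_succ]
  push_cast
  field_simp

lemma summable_norm_kummerCoeff_mul_pow (hc : 0 < c) (z : ℝ) :
    Summable fun n => ‖kummerCoeff a c n * z ^ n‖ := by
  set K := |a| / c + 1
  refine summable_of_ratio_norm_eventually_le (r := 1 / 2) (by norm_num) ?_
  filter_upwards [tendsto_natCast_atTop_atTop.eventually_ge_atTop (2 * K * |z|)] with n hn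
  have hcn : 0 < c + n := by positivity
  have hKc : |a + n| ≤ K * (c + n) := by
    calc |a + n| ≤ |a| + n := by simpa using abs_add_le a n
      _ ≤ K * (c + n) := by
        simp only [K]
        field_simp
        nlinarith [mul_nonneg (abs_nonneg a) n.cast_nonneg, sq_nonneg c]
  have hratio : |a + n| * |z| ≤ 1 / 2 * ((n + 1) * (c + n)) := by
    calc |a + n| * |z| ≤ K * (c + n) * |z| := by gcongr
      _ = (K * |z|) * (c + n) := by ring
      _ ≤ 1 / 2 * ((n + 1) * (c + n)) := by nlinarith
  have hrec := congrArg abs (kummerCoeff_succ (a := a) hc n)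
  rw [abs_mul, abs_of_pos (by positivity : (0 : ℝ) < (n + 1) * (c + n)), abs_mul] at hrec
  simp only [norm_mul, norm_pow, Real.norm_eq_abs, abs_abs]
  have key : (n + 1) * (c + n) * (|kummerCoeff a c (n + 1)| * |z| ^ (n + 1))
      ≤ (n + 1) * (c + n) * (1 / 2 * (|kummerCoeff a c n| * |z| ^ n)) := by
    calc (n + 1) * (c + n) * (|kummerCoeff a c (n + 1)| * |z| ^ (n + 1))
        = |a + n| * |z| * (|kummerCoeff a c n| * |z| ^ n) := by
          rw [pow_succ, ← mul_assoc, hrec]; ring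
      _ ≤ 1 / 2 * ((n + 1) * (c + n)) * (|kummerCoeff a c n| * |z| ^ n) := by gcongr
      _ = _ := by ring
  exact le_of_mul_le_mul_left key (by positivity : (0 : ℝ) < (n + 1) * (c + n))

lemma hasDerivAt_kummerM (hc : 0 < c) (z : ℝ) :
    HasDerivAt (kummerM a c) (powerSum (derivCoeff (kummerCoeff a c)) z) z :=
  kummerM_eq_powerSum a c ▸ hasDerivAt_powerSum (summable_norm_kummerCoeff_mul_pow hc) z

theorem kummerM_ode (hc : 0 < c) (z : ℝ) :
    z * powerSum (derivCoeff (derivCoeff (kummerCoeff a c))) z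
      + (c - z) * powerSum (derivCoeff (kummerCoeff a c)) z - a * kummerM a c z = 0 := by
  set u := kummerCoeff a c
  have hu := summable_norm_kummerCoeff_mul_pow (a := a) hc
  have hu₁ := summable_norm_derivCoeff_mul_pow hu
  have hu₂ := summable_norm_derivCoeff_mul_pow hu₁
  have hM : HasSum (fun n => u n * z ^ n) (kummerM a c z) := by
    rw [kummerM_eq_powerSum]; exact (hu z).of_norm.hasSum
  have hM₁ : HasSum (fun n => derivCoeff u n * z ^ n) (powerSum (derivCoeff u) z) :=
    (hu₁ z).of_norm.hasSum
  have hM₂ : HasSum (fun n => derivCoeff (derivCoeff u) n * z ^ n)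
      (powerSum (derivCoeff (derivCoeff u)) z) :=
    (hu₂ z).of_norm.hasSum
  have hsum := ((hM₂.natCast_mul_mul_pow.add (hM₁.mul_left c)).sub
    hM₁.natCast_mul_mul_pow).sub (hM.mul_left a)
  have hzero : (fun n : ℕ => n * derivCoeff u n * z ^ n + c * (derivCoeff u n * z ^ n)
      - n * u n * z ^ n - a * (u n * z ^ n)) = 0 := by
    funext n
    simp only [Pi.zero_apply, derivCoeff, u]
    linear_combination z ^ n * kummerCoeff_succ (a := a) hc n
  rw [hzero] at hsum
  linear_combination hsum.unique hasSum_zero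

end Kummer

lemma HasDerivAt.exp_neg_mul {f : ℝ → ℝ} {f' z : ℝ} (hf : HasDerivAt f f' z) :
    HasDerivAt (fun w => Real.exp (-w) * f w) (Real.exp (-z) * (f' - f z)) z := by
  have hexp : HasDerivAt (fun w => Real.exp (-w)) (-Real.exp (-z)) z := by
    simpa using (hasDerivAt_id z).neg.exp
  exact (hexp.mul hf).congr_deriv (by ring)

theorem laplacian_comp_norm_sq {N : ℕ} {g g' : ℝ → ℝ} {g'' : ℝ} (x : EuclideanSpace ℝ (Fin N))
    (hg : ∀ r, HasDerivAt g (g' r) r) (hg' : HasDerivAt g' g'' (‖x‖ ^ 2)) :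
    laplacian (fun y => g (‖y‖ ^ 2)) x = 2 * N * g' (‖x‖ ^ 2) + 4 * ‖x‖ ^ 2 * g'' := by
  have hnorm_sq (y : EuclideanSpace ℝ (Fin N)) :=
    (hasStrictFDerivAt_norm_sq y).hasFDerivAt
  have hpartial (i : Fin N) :
      (fun y => fderiv ℝ (fun y => g (‖y‖ ^ 2)) y (EuclideanSpace.single i 1))
        = fun y => g' (‖y‖ ^ 2) * (2 * y i) := by
    funext y
    have h : HasFDerivAt (fun y => g (‖y‖ ^ 2)) _ y := (hg _).comp_hasFDerivAt y (hnorm_sq y)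
    rw [h.fderiv]
    simp [EuclideanSpace.inner_single_right]
  have hsecond (i : Fin N) :
      fderiv ℝ (fun y => g' (‖y‖ ^ 2) * (2 * y i)) x (EuclideanSpace.single i 1)
        = 2 * g' (‖x‖ ^ 2) + 4 * g'' * x i ^ 2 := by
    have hcoord : HasFDerivAt (fun y : EuclideanSpace ℝ (Fin N) => 2 * y i)
        ((2 : ℝ) • (EuclideanSpace.proj i : EuclideanSpace ℝ (Fin N) →L[ℝ] ℝ)) x := by
      simpa using (EuclideanSpace.proj (𝕜 := ℝ) i).hasFDerivAt.const_mul (2 : ℝ)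
    have h : HasFDerivAt (fun y => g' (‖y‖ ^ 2) * (2 * y i)) _ x :=
      (hg'.comp_hasFDerivAt x (hnorm_sq x)).mul hcoord
    rw [h.fderiv]
    simp only [Function.comp_apply, add_apply, smul_apply,
      PiLp.proj_apply, PiLp.single_eq_same, smul_eq_mul, mul_one, innerSL_apply_apply,
      EuclideanSpace.inner_single_right, conj_trivial, one_mul, nsmul_eq_mul, Nat.cast_ofNat]
    ring
  simp only [laplacian, hpartial, hsecond, Finset.sum_add_distrib, ← Finset.mul_sum,
    ← EuclideanSpace.real_norm_sq_eq, Finset.sum_const, Finset.card_univ, Fintype.card_fin,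
    nsmul_eq_mul]
  ring

noncomputable def selfSimilar {N : ℕ} (β : ℝ) (W : ℝ → ℝ) (x : EuclideanSpace ℝ (Fin N))
    (τ : ℝ) : ℝ :=
  τ ^ (-β) * W (‖x‖ ^ 2 / (4 * τ))

theorem selfSimilar_solves_heat_equation {N : ℕ} {β : ℝ} {W W' W'' : ℝ → ℝ}
    (hW : ∀ z, HasDerivAt W (W' z) z) (hW' : ∀ z, HasDerivAt W' (W'' z) z)
    (hode : ∀ z, 0 ≤ z → z * W'' z + (N / 2 + z) * W' z + β * W z = 0)
    (x : EuclideanSpace ℝ (Fin N)) {τ : ℝ} (hτ : 0 < τ) :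
    deriv (selfSimilar β W x) τ = laplacian (fun y => selfSimilar β W y τ) x := by
  set z := ‖x‖ ^ 2 / (4 * τ)
  have hz : 0 ≤ z := by positivity
  have hxz : ‖x‖ ^ 2 = 4 * τ * z := by simp only [z]; field_simp
  have hpow : HasDerivAt (fun σ : ℝ => σ ^ (-β)) (-β * τ ^ (-β - 1)) τ :=
    Real.hasDerivAt_rpow_const (Or.inl hτ.ne')
  have harg : HasDerivAt (fun σ : ℝ => ‖x‖ ^ 2 / (4 * σ)) (-(z / τ)) τ := by
    have := ((hasDerivAt_id τ).const_mul 4).inv (by positivity) |>.const_mul (‖x‖ ^ 2)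
    refine (this.congr_deriv ?_).congr_of_eventuallyEq (Eventually.of_forall fun σ => ?_)
    · simp only [z, id]; field_simp
    · simp [div_eq_mul_inv]
  have htime : HasDerivAt (selfSimilar β W x)
      (-β * τ ^ (-β - 1) * W z + τ ^ (-β) * (W' z * -(z / τ))) τ :=
    hpow.mul ((hW z).comp τ harg)
  have hspace (r : ℝ) : HasDerivAt (fun r => τ ^ (-β) * W (r / (4 * τ)))
      (τ ^ (-β) * (W' (r / (4 * τ)) * (1 / (4 * τ)))) r :=
    ((hW _).comp r ((hasDerivAt_id r).div_const _)).const_mul _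
  have hspace' : HasDerivAt (fun r => τ ^ (-β) * (W' (r / (4 * τ)) * (1 / (4 * τ))))
      (τ ^ (-β) * (W'' z * (1 / (4 * τ)) * (1 / (4 * τ)))) (‖x‖ ^ 2) :=
    (((hW' _).comp _ ((hasDerivAt_id _).div_const _)).mul_const _).const_mul _
  rw [htime.deriv]
  simp only [selfSimilar]
  rw [laplacian_comp_norm_sq x hspace hspace', Real.rpow_sub_one hτ.ne']
  rw [show ‖x‖ ^ 2 / (4 * τ) = z from rfl, hxz]
  linear_combination (norm := skip) -(τ ^ (-β) / τ) * hode z hz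
  field_simp
  ring

lemma Phi_eq_selfSimilar (N : ℕ) (t₀ β : ℝ) (x : EuclideanSpace ℝ (Fin N)) (t : ℝ) :
    Phi N t₀ β x t
      = selfSimilar β (fun z => Real.exp (-z) * kummerM ((N : ℝ) / 2 - β) ((N : ℝ) / 2) z) x
          (t₀ + t) := by
  simp only [Phi, selfSimilar, neg_div, mul_assoc]

theorem Phi_solves_heat_equation_general (N : ℕ) (hN : 2 ≤ N) (t₀ β : ℝ) (ht₀ : 1 ≤ t₀)
    (x : EuclideanSpace ℝ (Fin N)) (t : ℝ) (ht : 0 ≤ t) :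
    deriv (fun s => Phi N t₀ β x s) t = laplacian (fun y => Phi N t₀ β y t) x := by
  have hc : (0 : ℝ) < N / 2 := by
    have : (2 : ℝ) ≤ N := by exact_mod_cast hN
    linarith
  have hM := hasDerivAt_kummerM (a := (N : ℝ) / 2 - β) hc
  have hM' := hasDerivAt_powerSum <| summable_norm_derivCoeff_mul_pow <|
    summable_norm_kummerCoeff_mul_pow (a := (N : ℝ) / 2 - β) hc
  have hheat := selfSimilar_solves_heat_equation (β := β) (fun z => (hM z).exp_neg_mul)
    (fun z => ((hM' z).sub (hM z)).exp_neg_mul)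
    (fun z _ => by
      simp only [Pi.sub_apply]
      linear_combination Real.exp (-z) * kummerM_ode hc z) x
    (by linarith : 0 < t₀ + t)
  simp only [Phi_eq_selfSimilar]
  rw [deriv_comp_const_add]
  exact hheat

/-- `Φ_β` solves the heat equation `∂_t Φ_β = Δ Φ_β` on `ℝ^N × [0,∞)`. -/
theorem Phi_solves_heat_equation (N : ℕ) (hN : 2 ≤ N) (t₀ β : ℝ) (ht₀ : 1 ≤ t₀)
    (hβ : 0 ≤ β) (x : EuclideanSpace ℝ (Fin N)) (t : ℝ) (ht : 0 ≤ t) :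
    deriv (fun s => Phi N t₀ β x s) t = laplacian (fun y => Phi N t₀ β y t) x :=
  Phi_solves_heat_equation_general N hN t₀ β ht₀ x t ht
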